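/- arXiv:math/9510213 — 4 statements merged into one kernel-verified Lean document; each statement's English description precedes it below -/
import Mathlib

section
/- With notation as in the construction of anti-associated polynomials: let $P_n$ satisfy the recurrence with coefficients $(b_n, a_n^2)$, let $Q_n$ ($0\le n\le r$) be the polynomials generated by the new coefficients $b_{-r},\dots,b_{-1}$ and $a_{-r+1}^2,\dots,a_{-1}^2$ via $Q_0=1$, $Q_{-1}=0$, $Q_{n+1}(x)=(x-b_{-r+n})Q_n(x)-a_{-r+n}^2Q_{n-1}(x)$ for $n\le r-1$, and let $P_n^{(-r)}$ be the anti-associated polynomials defined by the extended recurrence. Then for all $n\ge0$, $P_{n+r}^{(-r)}(x) = Q_r(x)P_n(x) - a_0^2 Q_{r-1}(x)P_{n-1}^{(1)}(x)$. -/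
open Polynomial

/-!
Both sides, as sequences in `n`, satisfy the three-term recurrence of the `P n`: the left side
by the defining recurrence of the anti-associated polynomials, the right side because it is a
combination of `P n` and of `P^{(1)}_{n-1}`, and prepending `P^{(1)}_{-1} = 0` to the associated
polynomials turns their shifted recurrence into the original one. Both sides agree at `n = 0, 1`,
and a solution of a three-term recurrence is determined by its first two terms.
-/

section ThreeTermRecurrence

variable {R : Type*} [CommRing R]

/-- `f (n + 1) = p n * f n - q n * f (n - 1)` for `n ≥ 1`, written without truncated subtraction. -/
def SolvesThreeTerm (p q : ℕ → R) (f : ℕ → R) : Prop :=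
  ∀ n, f (n + 2) = p (n + 1) * f (n + 1) - q (n + 1) * f n

variable {p q : ℕ → R} {f g : ℕ → R}

theorem SolvesThreeTerm.eq_of_eq_of_eq (hf : SolvesThreeTerm p q f) (hg : SolvesThreeTerm p q g)
    (h0 : f 0 = g 0) (h1 : f 1 = g 1) : f = g := by
  funext n
  induction n using Nat.twoStepInduction with
  | zero => exact h0
  | one => exact h1
  | more n ih0 ih1 => rw [hf n, hg n, ih0, ih1]

theorem SolvesThreeTerm.mul_sub_mul (hf : SolvesThreeTerm p q f) (hg : SolvesThreeTerm p q g)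
    (u v : R) : SolvesThreeTerm p q (fun n => u * f n - v * g n) := by
  intro n
  simp only [hf n, hg n]
  ring

theorem SolvesThreeTerm.zero_cons
    (hg : SolvesThreeTerm (fun n => p (n + 1)) (fun n => q (n + 1)) g) (h1 : g 1 = p 1 * g 0) :
    SolvesThreeTerm p q (fun n => if n = 0 then 0 else g (n - 1)) := by
  intro n
  cases n with
  | zero => simp [h1]
  | succ n => simpa using hg n

end ThreeTermRecurrence

theorem antiassociated_representation_general
    (r : ℕ)
    (b a2 : ℕ → ℝ)
    (P P1 Q Panti : ℕ → Polynomial ℝ)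
    -- the original monic orthogonal polynomials
    (hP0 : P 0 = 1) (hP1 : P 1 = X - C (b 0))
    (hP : ∀ n, 1 ≤ n → P (n + 1) = (X - C (b n)) * P n - C (a2 n) * P (n - 1))
    -- the associated polynomials of order 1
    (hP10 : P1 0 = 1) (hP11 : P1 1 = X - C (b 1))
    (hP1rec : ∀ n, 1 ≤ n →
      P1 (n + 1) = (X - C (b (n + 1))) * P1 n - C (a2 (n + 1)) * P1 (n - 1))
    -- the anti-associated polynomials
    (hPanti_init : ∀ n, n ≤ r → Panti n = Q n)
    (hPanti : ∀ n : ℕ, Panti (n + r + 1) =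
      (X - C (b n)) * Panti (n + r) - C (a2 n) * Panti (n + r - 1)) :
    ∀ n : ℕ, Panti (n + r) =
      Q r * P n - C (a2 0) * Q (r - 1) * (if n = 0 then 0 else P1 (n - 1)) := by
  have hPsol : SolvesThreeTerm (fun n => X - C (b n)) (fun n => C (a2 n)) P :=
    fun n => by simpa only [Nat.add_sub_cancel] using hP (n + 1) le_add_self
  have hP1sol : SolvesThreeTerm (fun n => X - C (b (n + 1))) (fun n => C (a2 (n + 1))) P1 :=
    fun n => by simpa only [Nat.add_sub_cancel] using hP1rec (n + 1) le_add_self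
  have hPantisol : SolvesThreeTerm (fun n => X - C (b n)) (fun n => C (a2 n))
      (fun n => Panti (n + r)) := by
    intro n
    simpa only [show n + 1 + r + 1 = n + 2 + r by omega, show n + 1 + r - 1 = n + r by omega]
      using hPanti (n + 1)
  have hP1shiftsol : SolvesThreeTerm (fun n => X - C (b n)) (fun n => C (a2 n))
      (fun n => if n = 0 then 0 else P1 (n - 1)) :=
    SolvesThreeTerm.zero_cons hP1sol (by rw [hP11, hP10, mul_one])
  have hRHSsol := hPsol.mul_sub_mul hP1shiftsol (Q r) (C (a2 0) * Q (r - 1))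
  refine congrFun (hPantisol.eq_of_eq_of_eq hRHSsol ?_ ?_)
  · simp [hPanti_init r le_rfl, hP0]
  · rw [show 1 + r = 0 + r + 1 by omega, hPanti 0, zero_add, hPanti_init r le_rfl,
      hPanti_init (r - 1) (Nat.sub_le r 1)]
    simp only [one_ne_zero, if_false, Nat.sub_self, hP1, hP10]
    ring

/-- Representation of the anti-associated polynomials:
`P_{n+r}^{(-r)} = Q_r P_n - a_0^2 Q_{r-1} P_{n-1}^{(1)}`.
Here `c n = b_{-r+n}` and `d n = a_{-r+n}^2` are the new coefficients
(`d r = a_0^2` is the new off-diagonal parameter). -/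
theorem antiassociated_representation
    (r : ℕ) (hr : 1 ≤ r)
    (b a2 : ℕ → ℝ) (ha : ∀ n, 1 ≤ n → a2 n ≠ 0)
    (c d : ℕ → ℝ) (hd : d r ≠ 0)
    (P P1 Q Panti : ℕ → Polynomial ℝ)
    -- the original monic orthogonal polynomials
    (hP0 : P 0 = 1) (hP1 : P 1 = X - C (b 0))
    (hP : ∀ n, 1 ≤ n → P (n + 1) = (X - C (b n)) * P n - C (a2 n) * P (n - 1))
    -- the associated polynomials of order 1
    (hP10 : P1 0 = 1) (hP11 : P1 1 = X - C (b 1))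
    (hP1rec : ∀ n, 1 ≤ n →
      P1 (n + 1) = (X - C (b (n + 1))) * P1 n - C (a2 (n + 1)) * P1 (n - 1))
    -- the polynomials generated by the new coefficients
    (hQ0 : Q 0 = 1) (hQ1 : Q 1 = X - C (c 0))
    (hQ : ∀ n, 1 ≤ n → n ≤ r - 1 →
      Q (n + 1) = (X - C (c n)) * Q n - C (d n) * Q (n - 1))
    -- the anti-associated polynomials
    (hPanti_init : ∀ n, n ≤ r → Panti n = Q n)
    (hPanti : ∀ n : ℕ, Panti (n + r + 1) =
      (X - C (b n)) * Panti (n + r) - C (a2 n) * Panti (n + r - 1))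
    (ha2zero : a2 0 = d r) :
    ∀ n : ℕ, Panti (n + r) =
      Q r * P n - C (a2 0) * Q (r - 1) * (if n = 0 then 0 else P1 (n - 1)) :=
  antiassociated_representation_general r b a2 P P1 Q Panti hP0 hP1 hP hP10 hP11 hP1rec hPanti_init
    hPanti
end

section
/- For the Grosjean differential operators, the intertwining relation $D\circ L_{G,\alpha,n} = L_{g,1+\alpha,n-1}\circ D$ holds as an identity of differential operators acting on smooth functions. -/
/-- The second order differential operator `σ D² + τ D + λ`. -/
noncomputable def secondOrderOp (σ τ : ℝ → ℝ) (lam : ℝ) (f : ℝ → ℝ) (x : ℝ) : ℝ :=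
  σ x * iteratedDeriv 2 f x + τ x * deriv f x + lam * f x

/-- The intertwining relation `D ∘ L_{G,α,n} = L_{g,1+α,n-1} ∘ D` for the Grosjean
differential operators, as an identity of operators on smooth functions. -/
theorem grosjean_operator_intertwining (α : ℝ) (n : ℕ) (f : ℝ → ℝ)
    (hf : ContDiff ℝ (⊤ : ℕ∞) f) (x : ℝ) :
    deriv (fun t => secondOrderOp (fun s => 1 - s ^ 2) (fun s => -1 - 2 * α - s)
        ((n : ℝ) ^ 2) f t) x =
      secondOrderOp (fun s => 1 - s ^ 2) (fun s => -1 - 2 * α - 3 * s)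
        (((n : ℝ) - 1) * ((n : ℝ) + 1)) (deriv f) x := by
  have hf' : ContDiff ℝ (⊤ : ℕ∞) f := hf.of_le (by simp)
  have hf1 : ContDiff ℝ (⊤ : ℕ∞) (deriv f) := (contDiff_infty_iff_deriv.mp hf').2
  have hf2 : ContDiff ℝ (⊤ : ℕ∞) (deriv (deriv f)) := (contDiff_infty_iff_deriv.mp hf1).2
  have hd0 : HasDerivAt f (deriv f x) x :=
    (hf'.differentiable (by norm_num) x).hasDerivAt
  have hd1 : HasDerivAt (deriv f) (deriv (deriv f) x) x :=
    (hf1.differentiable (by norm_num) x).hasDerivAt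
  have hd2 : HasDerivAt (deriv (deriv f)) (deriv (deriv (deriv f)) x) x :=
    (hf2.differentiable (by norm_num) x).hasDerivAt
  have hσ : HasDerivAt (fun t : ℝ => 1 - t ^ 2) (-(2 * x)) x := by
    simpa using (hasDerivAt_pow 2 x).const_sub 1
  have hτ : HasDerivAt (fun t : ℝ => -1 - 2 * α - t) (-1) x := by
    simpa using ((hasDerivAt_id x).const_sub (-1 - 2 * α))
  have key : HasDerivAt
      (fun t => (1 - t ^ 2) * deriv (deriv f) t + (-1 - 2 * α - t) * deriv f t
        + (n : ℝ) ^ 2 * f t)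
      ((-(2 * x)) * deriv (deriv f) x + (1 - x ^ 2) * deriv (deriv (deriv f)) x
        + ((-1) * deriv f x + (-1 - 2 * α - x) * deriv (deriv f) x)
        + (n : ℝ) ^ 2 * deriv f x) x :=
    ((hσ.mul hd2).add (hτ.mul hd1)).add (hd0.const_mul _)
  have heq : (fun t => secondOrderOp (fun s => 1 - s ^ 2) (fun s => -1 - 2 * α - s)
      ((n : ℝ) ^ 2) f t)
      = fun t => (1 - t ^ 2) * deriv (deriv f) t + (-1 - 2 * α - t) * deriv f t
        + (n : ℝ) ^ 2 * f t := by
    funext t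
    simp [secondOrderOp, iteratedDeriv_succ, iteratedDeriv_zero]
  rw [heq, key.deriv, secondOrderOp, iteratedDeriv_succ, iteratedDeriv_succ,
    iteratedDeriv_zero]
  ring
end

section
/- Let $\mu$ be a finite positive measure with finite moments, $c\in\mathbb{R}$, $\epsilon>0$, $\mu_c=\mu+\epsilon\delta_c$, and let $d\nu(t)=(t-c)^2\,d\mu(t)$. Then for every $x\ne c$ and every $n\ge1$, $\lambda_n(x;\mu_c)\le (x-c)^{-2}\lambda_{n-1}(x;\nu)$. -/
open MeasureTheory NNReal
open scoped ENNReal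

/-- The Christoffel function `λ_n(x; μ)`: the infimum of `∫ q² dμ` over all
polynomials `q` of degree at most `n` with `q(x) = 1`. -/
noncomputable def christoffel (μ : Measure ℝ) (n : ℕ) (x : ℝ) : ℝ :=
  sInf {I : ℝ | ∃ q : Polynomial ℝ, q.degree ≤ n ∧ q.eval x = 1 ∧
    I = ∫ t, (q.eval t) ^ 2 ∂μ}

lemma integrable_poly_eval (μ : Measure ℝ)
    (hmom : ∀ k : ℕ, Integrable (fun t : ℝ => t ^ k) μ) (r : Polynomial ℝ) :
    Integrable (fun t => r.eval t) μ := by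
  have h : (fun t : ℝ => r.eval t)
      = fun t => ∑ i ∈ Finset.range (r.natDegree + 1), r.coeff i * t ^ i := by
    funext t; exact r.eval_eq_sum_range t
  rw [h]
  exact integrable_finset_sum _ fun i _ => (hmom i).const_mul _

lemma integrable_dirac_of_meas {f : ℝ → ℝ} (hf : Measurable f) (a : ℝ) :
    Integrable f (Measure.dirac a) := by
  refine ⟨hf.aestronglyMeasurable, ?_⟩
  rw [HasFiniteIntegral, lintegral_dirac]
  exact ENNReal.coe_lt_top

/-- For `μ_c = μ + ε δ_c` and `dν(t) = (t-c)² dμ(t)` one has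
`λ_n(x; μ_c) ≤ (x-c)⁻² λ_{n-1}(x; ν)` for every `x ≠ c` and `n ≥ 1`. -/
theorem christoffel_add_dirac_upper_bound (μ : Measure ℝ) [IsFiniteMeasure μ]
    (hmom : ∀ k : ℕ, Integrable (fun t : ℝ => t ^ k) μ)
    (c : ℝ) (ε : ℝ) (hε : 0 < ε) (n : ℕ) (hn : 1 ≤ n) (x : ℝ) (hx : x ≠ c) :
    christoffel (μ + ENNReal.ofReal ε • Measure.dirac c) n x ≤
      (x - c) ^ (-2 : ℤ) *
        christoffel (μ.withDensity fun t => ENNReal.ofReal ((t - c) ^ 2)) (n - 1) x := by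
  have hxc : x - c ≠ 0 := sub_ne_zero.mpr hx
  set k : ℝ := ((x - c) ^ 2)⁻¹ with hkdef
  have hk : 0 < k := by positivity
  have hzpow : (x - c) ^ (-2 : ℤ) = k := by
    rw [hkdef, zpow_neg, zpow_two]; ring_nf
  set μc := μ + ENNReal.ofReal ε • Measure.dirac c with hμc
  set ν := μ.withDensity fun t => ENNReal.ofReal ((t - c) ^ 2) with hν
  set S := {I : ℝ | ∃ q : Polynomial ℝ, q.degree ≤ (n : ℕ) ∧ q.eval x = 1 ∧
    I = ∫ t, (q.eval t) ^ 2 ∂μc} with hS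
  set T := {I : ℝ | ∃ q : Polynomial ℝ, q.degree ≤ ((n - 1 : ℕ) : ℕ) ∧ q.eval x = 1 ∧
    I = ∫ t, (q.eval t) ^ 2 ∂ν} with hT
  have hSbdd : BddBelow S := by
    refine ⟨0, ?_⟩
    rintro I ⟨q, -, -, rfl⟩
    exact integral_nonneg fun t => sq_nonneg _
  have hTne : T.Nonempty := by
    refine ⟨∫ t, ((1 : Polynomial ℝ).eval t) ^ 2 ∂ν, 1, ?_, by simp, rfl⟩
    exact le_trans Polynomial.degree_one_le (by exact_mod_cast Nat.zero_le _)
  have key : ∀ I ∈ T, sInf S ≤ k * I := by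
    rintro I ⟨q, hqdeg, hqx, rfl⟩
    set p : Polynomial ℝ :=
      Polynomial.C (x - c)⁻¹ * ((Polynomial.X - Polynomial.C c) * q) with hp
    have hpeval : ∀ t, p.eval t = (x - c)⁻¹ * ((t - c) * q.eval t) := by
      intro t; simp [hp]
    have hpx : p.eval x = 1 := by
      rw [hpeval, hqx, mul_one, inv_mul_cancel₀ hxc]
    have hpdeg : p.degree ≤ (n : ℕ) := by
      calc p.degree ≤ (Polynomial.C (x - c)⁻¹).degree +
            ((Polynomial.X - Polynomial.C c) * q).degree := Polynomial.degree_mul_le _ _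
        _ ≤ 0 + ((Polynomial.X - Polynomial.C c).degree + q.degree) := by
            exact add_le_add Polynomial.degree_C_le (Polynomial.degree_mul_le _ _)
        _ ≤ 0 + (1 + ((n - 1 : ℕ) : WithBot ℕ)) := by
            refine add_le_add le_rfl (add_le_add ?_ hqdeg)
            rw [Polynomial.degree_X_sub_C]
        _ = (n : ℕ) := by
            rw [zero_add, ← Nat.cast_one, ← Nat.cast_add]
            congr 1; omega
    -- integrability
    have hint_p2_μ : Integrable (fun t => (p.eval t) ^ 2) μ := by
      have := integrable_poly_eval μ hmom (p ^ 2)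
      simpa [Polynomial.eval_pow] using this
    have hmeas_p2 : Measurable fun t : ℝ => (p.eval t) ^ 2 :=
      ((Polynomial.continuous p).measurable).pow_const 2
    have hint_p2_d : Integrable (fun t => (p.eval t) ^ 2)
        (ENNReal.ofReal ε • Measure.dirac c) :=
      (integrable_dirac_of_meas hmeas_p2 c).smul_measure ENNReal.ofReal_ne_top
    -- value of integral over μc
    have hpc : p.eval c = 0 := by rw [hpeval]; ring
    have hIμc : ∫ t, (p.eval t) ^ 2 ∂μc
        = ∫ t, (p.eval t) ^ 2 ∂μ := by
      rw [hμc, integral_add_measure hint_p2_μ hint_p2_d, integral_smul_measure,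
        integral_dirac, hpc]
      simp
    -- rewrite ν-integral
    have hIν : ∫ t, (q.eval t) ^ 2 ∂ν = ∫ t, (t - c) ^ 2 * (q.eval t) ^ 2 ∂μ := by
      have hfm : Measurable fun t : ℝ => ((t - c) ^ 2).toNNReal := by measurability
      rw [hν,
        show (fun t : ℝ => ENNReal.ofReal ((t - c) ^ 2))
          = fun t : ℝ => ((((t - c) ^ 2).toNNReal : ℝ≥0) : ℝ≥0∞) from rfl,
        integral_withDensity_eq_integral_smul hfm]
      congr 1
      funext t
      simp [NNReal.smul_def, Real.coe_toNNReal _ (sq_nonneg (t - c))]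
    have hIeq : ∫ t, (p.eval t) ^ 2 ∂μc = k * ∫ t, (q.eval t) ^ 2 ∂ν := by
      rw [hIμc, hIν, ← integral_const_mul]
      congr 1
      funext t
      rw [hpeval]
      rw [hkdef, mul_pow, inv_pow]
      ring
    have hmem : k * ∫ t, (q.eval t) ^ 2 ∂ν ∈ S := ⟨p, hpdeg, hpx, hIeq.symm⟩
    exact csInf_le hSbdd hmem
  have : sInf S ≤ k * sInf T := by
    rw [mul_comm, ← div_le_iff₀ hk]
    refine le_csInf hTne fun I hI => ?_
    rw [div_le_iff₀ hk, mul_comm]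
    exact key I hI
  unfold christoffel
  rw [hzpow]
  exact this
end

section
/- Let $p_n$ be orthonormal polynomials with recurrence $xp_n = a_{n+1}p_{n+1}+b_np_n+a_np_{n-1}$ and let $p_n^{(1)}$ be the orthonormal associated polynomials of order 1. Then for all $n\ge1$, $\sum_{k=1}^n p_k(x)p_{k-1}^{(1)}(x) = a_{n+1}\left[p_{n+1}'(x)p_{n-1}^{(1)}(x) - p_n'(x)p_n^{(1)}(x)\right]$. -/
/-!
Write `R n = a_{n+1} (p_{n+1}' q_{n-1} - p_n' q_n)`. Differentiating the recurrence of `p` at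
index `n + 1` gives `a_{n+2} p_{n+2}' + a_{n+1} p_n' = p_{n+1} + (X - b_{n+1}) p_{n+1}'`, while the
recurrence of `q` at index `n` gives `a_{n+2} q_{n+1} + a_{n+1} q_{n-1} = (X - b_{n+1}) q_n`;
eliminating `X - b_{n+1}` yields `R (n + 1) - R n = p_{n+1} q_n`, so the sum telescopes. The first
term is the same identity with `q_{-1} = 0` and `p_0' = 0`.
-/

open Polynomial Finset

theorem derivative_three_term {R : Type*} [CommRing R] {α β γ : R} {r s t : R[X]}
    (h : X * s = C α * r + C β * s + C γ * t) :
    s + X * derivative s = C α * derivative r + C β * derivative s + C γ * derivative t := by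
  simpa [derivative_mul] using congrArg derivative h

theorem cross_derivative_sub_eq_mul_of_three_term {R : Type*} [CommRing R] {α β γ : R}
    {p₀ p₁ p₂ q₀ q₁ q₂ : R[X]}
    (hp : X * p₁ = C α * p₂ + C β * p₁ + C γ * p₀)
    (hq : X * q₁ = C α * q₂ + C β * q₁ + C γ * q₀) :
    C α * (derivative p₂ * q₁ - derivative p₁ * q₂)
      - C γ * (derivative p₁ * q₀ - derivative p₀ * q₁) = p₁ * q₁ := by
  linear_combination derivative p₁ * hq - q₁ * derivative_three_term hp

theorem mixed_christoffel_darboux_general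
    (a b : ℕ → ℝ)
    (p q : ℕ → Polynomial ℝ)
    (hp0 : p 0 = 1)
    (hp : ∀ n, 1 ≤ n →
      X * p n = C (a (n + 1)) * p (n + 1) + C (b n) * p n + C (a n) * p (n - 1))
    (hq_init : X * q 0 = C (a 2) * q 1 + C (b 1) * q 0)
    (hq : ∀ n, 1 ≤ n →
      X * q n = C (a (n + 2)) * q (n + 1) + C (b (n + 1)) * q n + C (a (n + 1)) * q (n - 1))
    (n : ℕ) (hn : 1 ≤ n) :
    ∑ k ∈ Icc 1 n, p k * q (k - 1) =
      C (a (n + 1)) * (derivative (p (n + 1)) * q (n - 1) - derivative (p n) * q n) := by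
  induction n, hn using Nat.le_induction with
  | base =>
    have hq_init' : X * q 0 = C (a 2) * q 1 + C (b 1) * q 0 + C (a 1) * 0 := by
      rw [hq_init, mul_zero, add_zero]
    have step := cross_derivative_sub_eq_mul_of_three_term (hp 1 le_rfl) hq_init'
    rw [hp0, derivative_one] at step
    simp only [Icc_self, sum_singleton]
    linear_combination -step
  | succ n hn ih =>
    have step := cross_derivative_sub_eq_mul_of_three_term (hp (n + 1) (by omega)) (hq n hn)
    rw [sum_Icc_succ_top (by omega), ih]
    simp only [Nat.add_sub_cancel] at step ⊢
    linear_combination -step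

/-- Christoffel–Darboux type formula mixing orthonormal polynomials with their
associated polynomials of order 1:
`∑_{k=1}^n p_k p_{k-1}^{(1)} = a_{n+1} (p_{n+1}' p_{n-1}^{(1)} - p_n' p_n^{(1)})`. -/
theorem mixed_christoffel_darboux
    (a b : ℕ → ℝ) (ha : ∀ n, 1 ≤ n → 0 < a n)
    (p q : ℕ → Polynomial ℝ)
    (hp0 : p 0 = 1)
    (hp_init : X * p 0 = C (a 1) * p 1 + C (b 0) * p 0)
    (hp : ∀ n, 1 ≤ n →
      X * p n = C (a (n + 1)) * p (n + 1) + C (b n) * p n + C (a n) * p (n - 1))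
    (hq0 : q 0 = 1)
    (hq_init : X * q 0 = C (a 2) * q 1 + C (b 1) * q 0)
    (hq : ∀ n, 1 ≤ n →
      X * q n = C (a (n + 2)) * q (n + 1) + C (b (n + 1)) * q n + C (a (n + 1)) * q (n - 1))
    (n : ℕ) (hn : 1 ≤ n) :
    ∑ k ∈ Icc 1 n, p k * q (k - 1) =
      C (a (n + 1)) * (derivative (p (n + 1)) * q (n - 1) - derivative (p n) * q n) :=
  mixed_christoffel_darboux_general a b p q hp0 hp hq_init hq n hn
end
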